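/- Let G be a finite group with λ(G) = |G| − 5 such that the maximum order of an element of G is 6. Then G is isomorphic to the cyclic group C_6 or to the dihedral group D_12 of order 12. -/

import Mathlib

open Subgroup

/-- A subgroup is maximal cyclic if it is cyclic and not properly contained
in any cyclic subgroup. -/
def IsMaximalCyclic {G : Type*} [Group G] (H : Subgroup G) : Prop :=
  IsCyclic H ∧ ∀ K : Subgroup G, IsCyclic K → H ≤ K → H = K

/-- `lambdaCover G` is the number of maximal cyclic subgroups of `G`. -/
noncomputable def lambdaCover (G : Type*) [Group G] : ℕ :=
  Nat.card {H : Subgroup G // IsMaximalCyclic H}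

lemma isCyclic_zpowers {G : Type*} [Group G] (a : G) : IsCyclic (zpowers a) := by
  refine ⟨⟨⟨a, mem_zpowers a⟩, ?_⟩⟩
  rintro ⟨x, k, rfl⟩
  exact ⟨k, by ext; simp⟩

lemma exists_zpowers_eq {G : Type*} [Group G] {H : Subgroup G} (hH : IsCyclic H) :
    ∃ g : G, zpowers g = H := by
  obtain ⟨⟨g, hg⟩, hgen⟩ := hH.exists_generator
  refine ⟨g, le_antisymm (zpowers_le.mpr hg) ?_⟩
  intro x hx
  obtain ⟨k, hk⟩ := hgen ⟨x, hx⟩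
  exact ⟨k, congrArg Subtype.val hk⟩

lemma zpowers_max {G : Type*} [Group G] [Finite G] {a : G} (ha : orderOf a = 6)
    (hub : ∀ g : G, orderOf g ≤ 6) : IsMaximalCyclic (zpowers a) := by
  refine ⟨_root_.isCyclic_zpowers a, fun K hK hle => ?_⟩
  obtain ⟨k, hk⟩ := exists_zpowers_eq hK
  have hak : a ∈ zpowers k := hk ▸ hle (mem_zpowers a)
  have hdvd : orderOf a ∣ orderOf k := orderOf_dvd_of_mem_zpowers hak
  have hk6 : orderOf k = 6 := le_antisymm (hub k) (ha ▸ Nat.le_of_dvd (orderOf_pos k) hdvd)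
  have : zpowers a = zpowers k :=
    Subgroup.eq_of_le_of_card_ge (zpowers_le.mpr hak)
      (by rw [Nat.card_zpowers, Nat.card_zpowers, ha, hk6])
  rw [this, hk]

lemma not_max_of_lt {G : Type*} [Group G] [Finite G] {a g : G} (ha : orderOf a = 6)
    (hg : g ∈ zpowers a) (hne : orderOf g ≠ 6) : ¬ IsMaximalCyclic (zpowers g) := by
  intro hmax
  have := hmax.2 (zpowers a) (_root_.isCyclic_zpowers a) (zpowers_le.mpr hg)
  apply hne
  rw [← Nat.card_zpowers, this, Nat.card_zpowers, ha]

lemma lambda_le {G : Type*} [Group G] [Finite G] (B : Finset G)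
    (hB : ∀ H : Subgroup G, IsMaximalCyclic H → ∃ g ∈ B, zpowers g = H) :
    lambdaCover G ≤ B.card := by
  classical
  have : ∀ H : {H : Subgroup G // IsMaximalCyclic H}, ∃ g : B, zpowers (g : G) = H.1 := by
    rintro ⟨H, hH⟩
    obtain ⟨g, hg, hgen⟩ := hB H hH
    exact ⟨⟨g, hg⟩, hgen⟩
  choose f hf using this
  have hinj : Function.Injective f := by
    intro H₁ H₂ heq
    apply Subtype.ext
    rw [← hf H₁, ← hf H₂, heq]
  calc lambdaCover G ≤ Nat.card B := Nat.card_le_card_of_injective f hinj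
    _ = B.card := Nat.card_eq_finsetCard B

lemma key_inv {G : Type*} [Group G] [Finite G] {a : G} (ha : orderOf a = 6)
    (hub : ∀ g : G, orderOf g ≤ 6) (h : Nat.card G = lambdaCover G + 5) :
    ∀ g : G, g ∉ zpowers a → g * g = 1 := by
  classical
  cases nonempty_fintype G
  set P : G → Prop := fun g => IsMaximalCyclic (zpowers g) with hP
  set Sf : Finset G := Finset.univ.filter P with hSf
  set Nf : Finset G := Finset.univ.filter (fun g => ¬ P g) with hNf
  have hsplit : Sf.card + Nf.card = Fintype.card G :=
    Finset.card_filter_add_card_filter_not P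
  have hmaxa : P a := zpowers_max ha hub
  have haS : a ∈ Sf := by simp [hSf, hmaxa]
  have hmaxai : P a⁻¹ := by show IsMaximalCyclic (zpowers a⁻¹); rw [zpowers_inv]; exact hmaxa
  have haiS : a⁻¹ ∈ Sf := by simp [hSf, hmaxai]
  have hane : a ≠ a⁻¹ := by
    intro he
    have : a ^ 2 = 1 := by rw [pow_two]; nth_rewrite 2 [he]; simp
    have := orderOf_dvd_of_pow_eq_one this
    rw [ha] at this; omega
  -- the four non-maximal elements
  have hinj : ∀ i ∈ Set.Iio 6, ∀ j ∈ Set.Iio 6, a ^ i = a ^ j → i = j := by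
    have := pow_injOn_Iio_orderOf (x := a)
    rwa [ha] at this
  have hmem : ∀ i ∈ ({0, 2, 3, 4} : Finset ℕ), a ^ i ∈ Nf := by
    intro i hi
    have hpow : a ^ i ∈ zpowers a := (zpowers a).pow_mem (mem_zpowers a) i
    have hord : orderOf (a ^ i) ≠ 6 := by
      fin_cases hi <;> simp [orderOf_pow, ha]
    simp only [hNf, Finset.mem_filter, Finset.mem_univ, true_and]
    exact not_max_of_lt ha hpow hord
  set J : Finset G := ({0, 2, 3, 4} : Finset ℕ).image (a ^ ·) with hJ
  have hJcard : J.card = 4 := by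
    rw [hJ, Finset.card_image_of_injOn, ]
    · decide
    · intro i hi j hj hij
      simp only [Finset.coe_insert, Set.mem_insert_iff, Finset.coe_singleton,
        Set.mem_singleton_iff] at hi hj
      refine hinj i ?_ j ?_ hij <;> simp only [Set.mem_Iio] <;> omega
  have hJN : J ⊆ Nf := by
    intro x hx
    simp only [hJ, Finset.mem_image] at hx
    obtain ⟨i, hi, rfl⟩ := hx
    exact hmem i hi
  have hN4 : 4 ≤ Nf.card := hJcard ▸ Finset.card_le_card hJN
  -- lower bound on Sf
  have hcov1 : ∀ H : Subgroup G, IsMaximalCyclic H → ∃ g ∈ Sf.erase a⁻¹, zpowers g = H := by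
    intro H hH
    by_cases hHa : H = zpowers a
    · exact ⟨a, Finset.mem_erase.mpr ⟨hane, haS⟩, hHa.symm⟩
    · obtain ⟨g, hg⟩ := exists_zpowers_eq hH.1
      have hgS : g ∈ Sf := by
        simp only [hSf, Finset.mem_filter, Finset.mem_univ, true_and, hP]
        rw [hg]; exact hH
      have hgne : g ≠ a⁻¹ := by
        rintro rfl
        exact hHa (by rw [← hg, zpowers_inv])
      exact ⟨g, Finset.mem_erase.mpr ⟨hgne, hgS⟩, hg⟩
  have hS1 : lambdaCover G + 1 ≤ Sf.card := by
    have h1 := lambda_le _ hcov1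
    have h2 := Finset.card_erase_of_mem haiS
    have h3 : 1 ≤ Sf.card := Finset.card_pos.mpr ⟨a, haS⟩
    omega
  have htot : Fintype.card G = lambdaCover G + 5 := by
    rw [← Nat.card_eq_fintype_card]; exact h
  have hNcard : Nf.card = 4 := by omega
  have hNJ : Nf = J := (Finset.eq_of_subset_of_card_le hJN (by omega)).symm
  -- conclusion
  intro g hgz
  have hgS : g ∈ Sf := by
    by_contra hc
    have : g ∈ Nf := by
      simp only [hNf, Finset.mem_filter, Finset.mem_univ, true_and]
      simp only [hSf, Finset.mem_filter, Finset.mem_univ, true_and] at hc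
      exact hc
    rw [hNJ] at this
    simp only [hJ, Finset.mem_image] at this
    obtain ⟨i, _, rfl⟩ := this
    exact hgz ((zpowers a).pow_mem (mem_zpowers a) i)
  have hPg : P g := by simpa [hSf] using hgS
  by_contra hgg
  have hgnei : g ≠ g⁻¹ := by
    intro he
    exact hgg (by nth_rewrite 2 [he]; simp)
  have hgiS : g⁻¹ ∈ Sf := by
    have : P g⁻¹ := by show IsMaximalCyclic (zpowers g⁻¹); rw [zpowers_inv]; exact hPg
    simp [hSf, this]
  have hgia : g⁻¹ ≠ a⁻¹ := fun he => hgz (by rw [inv_injective he]; exact mem_zpowers a)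
  have hgza : zpowers g ≠ zpowers a := fun he => hgz (he ▸ mem_zpowers g)
  have hcov2 : ∀ H : Subgroup G, IsMaximalCyclic H →
      ∃ x ∈ (Sf.erase a⁻¹).erase g⁻¹, zpowers x = H := by
    intro H hH
    by_cases hHa : H = zpowers a
    · refine ⟨a, ?_, hHa.symm⟩
      refine Finset.mem_erase.mpr ⟨?_, Finset.mem_erase.mpr ⟨hane, haS⟩⟩
      intro he
      exact hgz (by rw [← inv_inv g, ← he]; exact inv_mem (mem_zpowers a))
    by_cases hHg : H = zpowers g
    · refine ⟨g, ?_, hHg.symm⟩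
      refine Finset.mem_erase.mpr ⟨hgnei, Finset.mem_erase.mpr ⟨?_, hgS⟩⟩
      intro he
      exact hgz (he ▸ inv_mem (mem_zpowers a))
    obtain ⟨x, hx⟩ := exists_zpowers_eq hH.1
    have hxS : x ∈ Sf := by
      simp only [hSf, Finset.mem_filter, Finset.mem_univ, true_and, hP]
      rw [hx]; exact hH
    have hx1 : x ≠ a⁻¹ := by rintro rfl; exact hHa (by rw [← hx, zpowers_inv])
    have hx2 : x ≠ g⁻¹ := by rintro rfl; exact hHg (by rw [← hx, zpowers_inv])
    exact ⟨x, Finset.mem_erase.mpr ⟨hx2, Finset.mem_erase.mpr ⟨hx1, hxS⟩⟩, hx⟩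
  have h1 := lambda_le _ hcov2
  have h2 := Finset.card_erase_of_mem haiS
  have h2' : g⁻¹ ∈ Sf.erase a⁻¹ := Finset.mem_erase.mpr ⟨hgia, hgiS⟩
  have h3 := Finset.card_erase_of_mem h2'
  have h4 : 1 ≤ (Sf.erase a⁻¹).card := Finset.card_pos.mpr ⟨g⁻¹, h2'⟩
  omega

theorem lambda_eq_card_sub_five_max_order_six {G : Type*} [Group G] [Finite G]
    (h : Nat.card G = lambdaCover G + 5)
    (h6 : IsGreatest {n | ∃ g : G, orderOf g = n} 6) :
    Nonempty (G ≃* Multiplicative (ZMod 6)) ∨ Nonempty (G ≃* DihedralGroup 6) := by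
  classical
  obtain ⟨a, ha⟩ := h6.1
  have hub : ∀ g : G, orderOf g ≤ 6 := fun g => h6.2 ⟨g, rfl⟩
  have key := key_inv ha hub h
  by_cases hC : ∀ g : G, g ∈ zpowers a
  · left
    have hcyc : IsCyclic G := ⟨a, hC⟩
    have hcard : Nat.card G = 6 := by
      rw [← orderOf_eq_card_of_forall_mem_zpowers hC, ha]
    have hcard' : Nat.card G = Nat.card (Multiplicative (ZMod 6)) := by
      rw [hcard, Nat.card_eq_fintype_card]
      rfl
    exact ⟨mulEquivOfCyclicCardEq hcard'⟩
  · right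
    push_neg at hC
    obtain ⟨t, ht⟩ := hC
    have ha2 : ¬ (a = a⁻¹) := by
      intro he
      have h2 : a ^ 2 = 1 := by rw [pow_two]; nth_rewrite 2 [he]; simp
      have := orderOf_dvd_of_pow_eq_one h2
      rw [ha] at this; omega
    have hinvx : ∀ x : G, x ∉ zpowers a → x⁻¹ = x := fun x hx =>
      inv_eq_of_mul_eq_one_right (key x hx)
    have conj' : ∀ x : G, x ∉ zpowers a → ∀ c ∈ zpowers a, x * c * x⁻¹ = c⁻¹ := by
      intro x hx c hc
      have hxc : x * c ∉ zpowers a := by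
        intro hm
        exact hx (by simpa using mul_mem hm (inv_mem hc))
      have h1 : (x * c) * (x * c) = 1 := key _ hxc
      rw [hinvx x hx]
      exact eq_inv_of_mul_eq_one_left ((mul_assoc (x * c) x c).trans h1)
    have cover : ∀ g : G, g ∉ zpowers a → t * g ∈ zpowers a := by
      intro g hg
      by_contra htg
      have h1 := conj' (t * g) htg a (mem_zpowers a)
      have e1 : (t * g) * a * (t * g)⁻¹ = t * (g * a * g⁻¹) * t⁻¹ := by group
      rw [conj' g hg a (mem_zpowers a)] at e1
      have e2 : t * a⁻¹ * t⁻¹ = a := by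
        have := conj' t ht a⁻¹ (inv_mem (mem_zpowers a))
        rwa [inv_inv] at this
      rw [e1, e2] at h1
      exact ha2 h1
    have htt : t * t = 1 := key t ht
    have hta : ∀ c ∈ zpowers a, c * t = t * c⁻¹ := by
      intro c hc
      have h1 := conj' t ht c⁻¹ (inv_mem hc)
      rw [inv_inv] at h1
      conv_lhs => rw [← h1]
      group
    have hpa : ∀ n : ℕ, a ^ n * t = t * (a ^ n)⁻¹ := fun n =>
      hta _ ((zpowers a).pow_mem (mem_zpowers a) n)
    have hp : ∀ i j : ZMod 6, a ^ (i + j).val = a ^ i.val * a ^ j.val := by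
      intro i j
      calc a ^ (i + j).val = a ^ ((i.val + j.val) % orderOf a) := by rw [ZMod.val_add, ha]
        _ = a ^ (i.val + j.val) := pow_mod_orderOf a _
        _ = a ^ i.val * a ^ j.val := pow_add a _ _
    have hs : ∀ i j : ZMod 6, a ^ (i - j).val = a ^ i.val * (a ^ j.val)⁻¹ := by
      intro i j
      have h1 := hp (i - j) j
      rw [show i - j + j = i by ring] at h1
      exact eq_mul_inv_of_mul_eq h1.symm
    have hcomm : ∀ m n : ℕ, (a ^ m)⁻¹ * a ^ n = a ^ n * (a ^ m)⁻¹ := by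
      intro m n
      exact (((Commute.refl a).pow_pow m n).inv_left).eq
    set f : DihedralGroup 6 → G := fun x => match x with
      | DihedralGroup.r i => a ^ i.val
      | DihedralGroup.sr i => t * a ^ i.val with hf
    have hmul : ∀ x y : DihedralGroup 6, f (x * y) = f x * f y := by
      rintro (i | i) (j | j)
      · exact hp i j
      · show t * a ^ (j - i).val = a ^ i.val * (t * a ^ j.val)
        calc t * a ^ (j - i).val
            = t * (a ^ j.val * (a ^ i.val)⁻¹) := by rw [hs j i]
          _ = t * ((a ^ i.val)⁻¹ * a ^ j.val) := by rw [hcomm i.val j.val]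
          _ = (t * (a ^ i.val)⁻¹) * a ^ j.val := by rw [mul_assoc]
          _ = (a ^ i.val * t) * a ^ j.val := by rw [← hpa i.val]
          _ = a ^ i.val * (t * a ^ j.val) := by rw [mul_assoc]
      · show t * a ^ (i + j).val = (t * a ^ i.val) * a ^ j.val
        rw [hp i j, mul_assoc]
      · show a ^ (j - i).val = (t * a ^ i.val) * (t * a ^ j.val)
        rw [hs j i]
        calc a ^ j.val * (a ^ i.val)⁻¹
            = (a ^ i.val)⁻¹ * a ^ j.val := (hcomm i.val j.val).symm
          _ = (t * t) * ((a ^ i.val)⁻¹ * a ^ j.val) := by rw [htt, one_mul]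
          _ = t * (t * (a ^ i.val)⁻¹) * a ^ j.val := by group
          _ = t * (a ^ i.val * t) * a ^ j.val := by rw [← hpa i.val]
          _ = (t * a ^ i.val) * (t * a ^ j.val) := by group
    have hvi : ∀ i j : ZMod 6, a ^ i.val = a ^ j.val → i = j := by
      intro i j hij
      have h1 : i.val = j.val := by
        refine pow_injOn_Iio_orderOf ?_ ?_ hij <;>
          · rw [Set.mem_Iio, ha]; exact ZMod.val_lt _
      have h2 : ((i.val : ZMod 6)) = ((j.val : ZMod 6)) := by rw [h1]
      rwa [ZMod.natCast_zmod_val, ZMod.natCast_zmod_val] at h2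
    have hnotin : ∀ i : ZMod 6, t * a ^ i.val ∉ zpowers a := by
      intro i hm
      exact ht (by simpa using mul_mem hm (inv_mem ((zpowers a).pow_mem (mem_zpowers a) i.val)))
    have hfi : Function.Injective f := by
      rintro (i | i) (j | j) hxy
      · exact congrArg DihedralGroup.r (hvi i j hxy)
      · have hxy' : a ^ i.val = t * a ^ j.val := hxy
        exact absurd (by rw [← hxy']; exact (zpowers a).pow_mem (mem_zpowers a) i.val) (hnotin j)
      · have hxy' : t * a ^ i.val = a ^ j.val := hxy
        exact absurd (by rw [hxy']; exact (zpowers a).pow_mem (mem_zpowers a) j.val) (hnotin i)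
      · have hxy' : t * a ^ i.val = t * a ^ j.val := hxy
        exact congrArg DihedralGroup.sr (hvi i j (mul_left_cancel hxy'))
    have hzv : ∀ (k : ℤ), a ^ ((k : ZMod 6)).val = a ^ k := by
      intro k
      have h1 : (((k : ZMod 6)).val : ℤ) = k % 6 := ZMod.val_intCast k
      calc a ^ ((k : ZMod 6)).val = a ^ ((((k : ZMod 6)).val : ℤ)) := (zpow_natCast a _).symm
        _ = a ^ (k % ((orderOf a : ℤ))) := by rw [h1, ha]; norm_num
        _ = a ^ k := zpow_mod_orderOf a k
    have hfs : Function.Surjective f := by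
      intro g
      by_cases hg : g ∈ zpowers a
      · obtain ⟨k, hk⟩ := mem_zpowers_iff.mp hg
        exact ⟨DihedralGroup.r (k : ZMod 6), by simpa [hf, hzv k] using hk⟩
      · obtain ⟨k, hk⟩ := mem_zpowers_iff.mp (cover g hg)
        refine ⟨DihedralGroup.sr (k : ZMod 6), ?_⟩
        show t * a ^ ((k : ZMod 6)).val = g
        rw [hzv k, hk, ← mul_assoc, htt, one_mul]
    exact ⟨(MulEquiv.ofBijective (MonoidHom.mk' f hmul) ⟨hfi, hfs⟩).symm⟩
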